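/- arXiv:1811.02085 — 3 statements merged into one kernel-verified Lean document; each statement's English description precedes it below -/
import Mathlib

section
/- Let k be an even natural number. Then the (k+1)-st Fibonacci number satisfies F_{k+1} = binom(k, k/2) + 2 · ∑_{q=1}^{⌊k/10⌋} binom(k, k/2 − 5q) − ∑_{q odd, 1 ≤ q ≤ ⌊(k+1)/5⌋} binom(k+1, (k+1−5q)/2). -/
def gg (n r : ℕ) : ℤ := ∑ j ∈ Finset.range (n+1), if j % 5 = r then (n.choose j : ℤ) else 0

lemma gg_succ (n r : ℕ) (hr : r < 5) : gg (n+1) r = gg n r + gg n ((r+4) % 5) := by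
  unfold gg
  rw [Finset.sum_range_succ']
  have h1 : ∀ i ∈ Finset.range (n+1),
      (if (i+1) % 5 = r then (((n+1).choose (i+1) : ℤ)) else 0)
      = (if i % 5 = (r+4) % 5 then ((n.choose i : ℤ)) else 0)
        + (if (i+1) % 5 = r then ((n.choose (i+1) : ℤ)) else 0) := by
    intro i _
    have hc : ((n+1).choose (i+1) : ℤ) = (n.choose i : ℤ) + (n.choose (i+1) : ℤ) := by
      rw [Nat.choose_succ_succ]; push_cast; ring
    have hiff : (i+1) % 5 = r ↔ i % 5 = (r+4) % 5 := by omega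
    by_cases h : (i+1) % 5 = r
    · rw [if_pos h, if_pos (hiff.mp h), if_pos h, hc]
    · rw [if_neg h, if_neg (fun hh => h (hiff.mpr hh)), if_neg h]; ring
  rw [Finset.sum_congr rfl h1, Finset.sum_add_distrib]
  have h2 : ∑ j ∈ Finset.range (n+1), (if j % 5 = r then (n.choose j : ℤ) else 0)
      = (∑ i ∈ Finset.range (n+1), if (i+1) % 5 = r then (n.choose (i+1) : ℤ) else 0)
        + (if 0 % 5 = r then (n.choose 0 : ℤ) else 0) := by
    have := Finset.sum_range_succ' (fun j => if j % 5 = r then (n.choose j : ℤ) else 0) (n+1)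
    rw [Finset.sum_range_succ] at this
    simp only [Nat.choose_self, Nat.choose_succ_self, Nat.cast_zero] at this
    rw [← this]
    simp [Nat.choose_succ_self]
  rw [h2]
  simp [Nat.choose_zero_right]
  ring

lemma gg_two (n r : ℕ) (hr : r < 5) :
    gg (n+2) r = gg n r + 2 * gg n ((r+4) % 5) + gg n ((r+3) % 5) := by
  have h1 := gg_succ (n+1) r hr
  have h2 := gg_succ n r hr
  have h3 := gg_succ n ((r+4)%5) (by omega)
  have e : ((r+4)%5 + 4) % 5 = (r+3) % 5 := by omega
  rw [e] at h3
  rw [h1, h2, h3]; ring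

lemma key (m : ℕ) :
    2 * gg (2*m) (m % 5) - gg (2*m) ((m+2) % 5) - gg (2*m) ((m+3) % 5)
        = 2 * (Nat.fib (2*m+1) : ℤ) ∧
    gg (2*m) ((m+1) % 5) + gg (2*m) ((m+4) % 5) - gg (2*m) ((m+2) % 5)
        - gg (2*m) ((m+3) % 5) = 2 * (Nat.fib (2*m) : ℤ) := by
  induction m with
  | zero =>
    constructor <;> simp [gg]
  | succ m ih =>
    obtain ⟨ihP, ihQ⟩ := ih
    have e2 : 2 * (m+1) = 2*m + 2 := by ring
    -- expand each gg (2m+2) ((m+1+t)%5)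
    have E : ∀ t : ℕ, gg (2*(m+1)) ((m+1+t) % 5)
        = gg (2*m) ((m+1+t) % 5) + 2 * gg (2*m) ((m+t) % 5) + gg (2*m) ((m+4+t) % 5) := by
      intro t
      rw [e2, gg_two (2*m) ((m+1+t)%5) (by omega)]
      have a1 : ((m+1+t) % 5 + 4) % 5 = (m+t) % 5 := by omega
      have a2 : ((m+1+t) % 5 + 3) % 5 = (m+4+t) % 5 := by omega
      rw [a1, a2]
    have E0 := E 0; have E1 := E 1; have E2 := E 2; have E3 := E 3; have E4 := E 4
    simp only [Nat.add_zero] at E0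
    have n0 : (m+1+4) % 5 = m % 5 := by omega
    have n1 : (m+4+1) % 5 = m % 5 := by omega
    have n2 : (m+4+2) % 5 = (m+1) % 5 := by omega
    have n3 : (m+4+3) % 5 = (m+2) % 5 := by omega
    have n4 : (m+4+4) % 5 = (m+3) % 5 := by omega
    have n5 : (m+1+1) % 5 = (m+2) % 5 := by omega
    have n6 : (m+1+2) % 5 = (m+3) % 5 := by omega
    have n7 : (m+1+3) % 5 = (m+4) % 5 := by omega
    have n8 : (m+4+0) % 5 = (m+4) % 5 := by omega
    rw [n0, n4] at E4
    rw [n5, n1] at E1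
    rw [n6, n2] at E2
    rw [n7, n3] at E3
    have f1 : (Nat.fib (2*(m+1)+1) : ℤ) = (Nat.fib (2*m+1) : ℤ) + (Nat.fib (2*m) : ℤ) + (Nat.fib (2*m+1) : ℤ) := by
      have : 2*(m+1)+1 = (2*m+1) + 2 := by ring
      rw [this, Nat.fib_add_two]
      have : 2*m + 1 + 1 = 2*m + 2 := by ring
      push_cast [this, Nat.fib_add_two]
      ring
    have f2 : (Nat.fib (2*(m+1)) : ℤ) = (Nat.fib (2*m+1) : ℤ) + (Nat.fib (2*m) : ℤ) := by
      have : 2*(m+1) = 2*m + 2 := by ring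
      rw [this]
      push_cast [Nat.fib_add_two]
      ring
    simp only [n0, n5, n6, n7]
    constructor
    · rw [E0, E2, E3, f1]; linarith
    · rw [E1, E4, E2, E3, f2]; linarith

lemma half_split (m : ℕ) (f : ℕ → ℤ) (hsym : ∀ i < m, f (2*m - i) = f i) :
    ∑ j ∈ Finset.range (2*m+1), f j = f m + 2 * ∑ j ∈ Finset.range m, f j := by
  have hs : Finset.range (2*m+1) = Finset.range (m+1) ∪ Finset.Ico (m+1) (2*m+1) := by
    rw [Finset.range_eq_Ico, Finset.range_eq_Ico]
    rw [Finset.Ico_union_Ico_eq_Ico (by omega) (by omega)]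
  rw [hs, Finset.sum_union (by
    rw [Finset.range_eq_Ico]
    exact Finset.Ico_disjoint_Ico_consecutive 0 (m+1) (2*m+1))]
  rw [Finset.sum_range_succ]
  have h2 : ∑ j ∈ Finset.Ico (m+1) (2*m+1), f j = ∑ j ∈ Finset.range m, f j := by
    rw [Finset.sum_Ico_eq_sum_range]
    have hlen : 2*m+1 - (m+1) = m := by omega
    rw [hlen]
    rw [← Finset.sum_range_reflect (fun i => f (m+1+i)) m]
    apply Finset.sum_congr rfl
    intro i hi
    simp only [Finset.mem_range] at hi
    have : m + 1 + (m - 1 - i) = 2*m - i := by omega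
    rw [this, hsym i hi]
  rw [h2]; ring

lemma partA (m : ℕ) :
    gg (2*m) (m % 5) = ((2*m).choose m : ℤ)
      + 2 * ∑ q ∈ Finset.Icc 1 (m/5), (((2*m).choose (m - 5*q)) : ℤ) := by
  unfold gg
  rw [half_split m _ (by
    intro i hi
    have hc : (2*m).choose (2*m - i) = (2*m).choose i := Nat.choose_symm (by omega)
    have hcond : ((2*m - i) % 5 = m % 5) ↔ (i % 5 = m % 5) := by omega
    by_cases h : i % 5 = m % 5
    · rw [if_pos h, if_pos (hcond.mpr h), hc]
    · rw [if_neg h, if_neg (fun hh => h (hcond.mp hh))])]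
  rw [if_pos rfl]
  congr 1
  congr 1
  rw [← Finset.sum_filter]
  apply Finset.sum_nbij' (fun j => (m - j)/5) (fun q => m - 5*q)
  · intro j hj
    simp only [Finset.mem_filter, Finset.mem_range] at hj
    simp only [Finset.mem_Icc]
    omega
  · intro q hq
    simp only [Finset.mem_Icc] at hq
    simp only [Finset.mem_filter, Finset.mem_range]
    omega
  · intro j hj
    simp only [Finset.mem_filter, Finset.mem_range] at hj
    omega
  · intro q hq
    simp only [Finset.mem_Icc] at hq
    omega
  · intro j hj
    simp only [Finset.mem_filter, Finset.mem_range] at hj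
    have : m - 5*((m - j)/5) = j := by omega
    rw [this]

lemma half_split2 (m : ℕ) (f : ℕ → ℤ) (hsym : ∀ i ≤ m, f (2*m+1 - i) = f i) :
    ∑ j ∈ Finset.range (2*m+2), f j = 2 * ∑ j ∈ Finset.range (m+1), f j := by
  have hs : Finset.range (2*m+2) = Finset.range (m+1) ∪ Finset.Ico (m+1) (2*m+2) := by
    rw [Finset.range_eq_Ico, Finset.range_eq_Ico]
    rw [Finset.Ico_union_Ico_eq_Ico (by omega) (by omega)]
  rw [hs, Finset.sum_union (by
    rw [Finset.range_eq_Ico]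
    exact Finset.Ico_disjoint_Ico_consecutive 0 (m+1) (2*m+2))]
  have h2 : ∑ j ∈ Finset.Ico (m+1) (2*m+2), f j = ∑ j ∈ Finset.range (m+1), f j := by
    rw [Finset.sum_Ico_eq_sum_range]
    have hlen : 2*m+2 - (m+1) = m+1 := by omega
    rw [hlen]
    rw [← Finset.sum_range_reflect (fun i => f (m+1+i)) (m+1)]
    apply Finset.sum_congr rfl
    intro i hi
    simp only [Finset.mem_range] at hi
    have : m + 1 + (m + 1 - 1 - i) = 2*m+1 - i := by omega
    rw [this, hsym i (by omega)]
  rw [h2]; ring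

lemma partB (m : ℕ) :
    gg (2*m+1) ((m+3) % 5)
      = 2 * ∑ q ∈ (Finset.Icc 1 ((2*m+1)/5)).filter (fun q => Odd q),
          (((2*m+1).choose ((2*m+1-5*q)/2)) : ℤ) := by
  unfold gg
  have e : 2*m+1+1 = 2*m+2 := by omega
  rw [e]
  rw [half_split2 m _ (by
    intro i hi
    have hc : (2*m+1).choose (2*m+1 - i) = (2*m+1).choose i := Nat.choose_symm (by omega)
    have hcond : ((2*m+1 - i) % 5 = (m+3) % 5) ↔ (i % 5 = (m+3) % 5) := by omega
    by_cases h : i % 5 = (m+3) % 5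
    · rw [if_pos h, if_pos (hcond.mpr h), hc]
    · rw [if_neg h, if_neg (fun hh => h (hcond.mp hh))])]
  congr 1
  rw [← Finset.sum_filter]
  apply Finset.sum_nbij' (fun j => (2*m+1 - 2*j)/5) (fun q => (2*m+1 - 5*q)/2)
  · intro j hj
    simp only [Finset.mem_filter, Finset.mem_range] at hj
    simp only [Finset.mem_filter, Finset.mem_Icc, Nat.odd_iff]
    omega
  · intro q hq
    simp only [Finset.mem_filter, Finset.mem_Icc, Nat.odd_iff] at hq
    simp only [Finset.mem_filter, Finset.mem_range]
    omega
  · intro j hj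
    simp only [Finset.mem_filter, Finset.mem_range] at hj
    omega
  · intro q hq
    simp only [Finset.mem_filter, Finset.mem_Icc, Nat.odd_iff] at hq
    omega
  · intro j hj
    simp only [Finset.mem_filter, Finset.mem_range] at hj
    have : (2*m+1 - 5*((2*m+1 - 2*j)/5))/2 = j := by omega
    rw [this]

theorem fib_even_identity (k : ℕ) (hk : Even k) :
    (Nat.fib (k + 1) : ℤ) =
      (Nat.choose k (k / 2) : ℤ)
        + 2 * ∑ q ∈ Finset.Icc 1 (k / 10), (Nat.choose k (k / 2 - 5 * q) : ℤ)
        - ∑ q ∈ (Finset.Icc 1 ((k + 1) / 5)).filter (fun q => Odd q),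
            (Nat.choose (k + 1) ((k + 1 - 5 * q) / 2) : ℤ) := by
  obtain ⟨m, hm⟩ := hk
  subst hm
  rw [show m + m = 2*m from by ring]
  simp only [show (2*m)/2 = m from by omega, show (2*m)/10 = m/5 from by omega]
  have hA := partA m
  have hB := partB m
  have hK := (key m).1
  have hS := gg_succ (2*m) ((m+3) % 5) (by omega)
  have e : ((m+3) % 5 + 4) % 5 = (m+2) % 5 := by omega
  rw [e] at hS
  linarith
end

section
/- Let k be an odd natural number. Then the (k+1)-st Fibonacci number satisfies F_{k+1} = (1/2) · binom(k+1, (k+1)/2) − 2 · ∑_{q odd, 1 ≤ q ≤ ⌊k/5⌋} binom(k, (k−5q)/2) + ∑_{q=1}^{⌊(k+1)/10⌋} binom(k+1, (k+1)/2 − 5q). Equivalently (to avoid the fraction), 2·F_{k+1} = binom(k+1, (k+1)/2) − 4 · ∑_{q odd, 1 ≤ q ≤ ⌊k/5⌋} binom(k, (k−5q)/2) + 2 · ∑_{q=1}^{⌊(k+1)/10⌋} binom(k+1, (k+1)/2 − 5q). -/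
open Finset

/-- Binomial coefficient with integer second argument, zero for negatives. -/
def cc (n : ℕ) (m : ℤ) : ℤ := if 0 ≤ m then (n.choose m.toNat : ℤ) else 0

lemma cc_neg {n : ℕ} {m : ℤ} (h : m < 0) : cc n m = 0 := by
  simp [cc, not_le.mpr h]

lemma cc_big {n : ℕ} {m : ℤ} (h : (n : ℤ) < m) : cc n m = 0 := by
  have h0 : 0 ≤ m := le_trans (Int.ofNat_nonneg n) h.le
  have : n < m.toNat := by omega
  simp [cc, h0, Nat.choose_eq_zero_of_lt this]

lemma cc_coe (n : ℕ) (m : ℕ) : cc n (m : ℤ) = (n.choose m : ℤ) := by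
  simp [cc]

lemma cc_pascal (n : ℕ) (m : ℤ) : cc (n + 1) m = cc n m + cc n (m - 1) := by
  rcases lt_or_ge m 0 with h | h
  · rw [cc_neg h, cc_neg h, cc_neg (by omega)]; ring
  · obtain ⟨a, rfl⟩ : ∃ a : ℕ, m = (a : ℤ) := ⟨m.toNat, (Int.toNat_of_nonneg h).symm⟩
    cases a with
    | zero => rw [show ((0:ℕ):ℤ) = 0 from rfl, cc_neg (by omega : (0:ℤ)-1 < 0)]; simp [cc]
    | succ a =>
        have : ((a : ℤ) + 1) - 1 = (a : ℤ) := by ring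
        rw [show ((a+1 : ℕ) : ℤ) = (a : ℤ) + 1 by push_cast; ring] at *
        rw [this, show (a : ℤ) + 1 = ((a+1 : ℕ) : ℤ) by push_cast; ring]
        rw [cc_coe, cc_coe, cc_coe, Nat.choose_succ_succ]
        push_cast; ring

/-- The term of the Andrews-type alternating sum with shift `t`. -/
def ff (t : ℤ) (n : ℕ) (j : ℤ) : ℤ := (j.negOnePow : ℤ) * cc n ((n + t - 5 * j) / 2)

/-- The alternating sum. -/
noncomputable def AA (t : ℤ) (n : ℕ) : ℤ := ∑ j ∈ Icc (-(n : ℤ) - 1) ((n : ℤ) + 1), ff t n j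

lemma ff_zero_hi {t : ℤ} (ht0 : 0 ≤ t) (ht4 : t ≤ 4) {n : ℕ} {j : ℤ}
    (h : (n : ℤ) + 1 < j) : ff t n j = 0 := by
  have : ((n : ℤ) + t - 5 * j) / 2 < 0 := by omega
  simp [ff, cc_neg this]

lemma ff_zero_lo {t : ℤ} (ht0 : 0 ≤ t) (ht4 : t ≤ 4) {n : ℕ} {j : ℤ}
    (h : j < -(n : ℤ) - 1) : ff t n j = 0 := by
  have : (n : ℤ) < ((n : ℤ) + t - 5 * j) / 2 := by omega
  simp [ff, cc_big this]

lemma AA_ext {t : ℤ} (ht0 : 0 ≤ t) (ht4 : t ≤ 4) {n : ℕ} {a b : ℤ}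
    (ha : a ≤ -(n : ℤ) - 1) (hb : (n : ℤ) + 1 ≤ b) :
    ∑ j ∈ Icc a b, ff t n j = AA t n := by
  rw [AA]
  apply (Finset.sum_subset ?_ ?_).symm
  · intro x hx; simp only [mem_Icc] at *; omega
  · intro x hx hx'
    simp only [mem_Icc] at hx hx'
    rcases (by omega : x < -(n:ℤ) - 1 ∨ (n:ℤ) + 1 < x) with h | h
    · exact ff_zero_lo ht0 ht4 h
    · exact ff_zero_hi ht0 ht4 h

lemma ff_succ (t : ℤ) (n : ℕ) (j : ℤ) : ff t (n + 1) j = ff (t + 1) n j + ff (t - 1) n j := by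
  have h1 : ((n : ℤ) + 1 + t - 5 * j) / 2 = ((n : ℤ) + (t + 1) - 5 * j) / 2 := by
    congr 1; ring
  have h2 : ((n : ℤ) + (t + 1) - 5 * j) / 2 - 1 = ((n : ℤ) + (t - 1) - 5 * j) / 2 := by
    omega
  simp only [ff, Nat.cast_add, Nat.cast_one, cc_pascal, h1, h2]
  ring

lemma ff_five (n : ℕ) (j : ℤ) : ff 5 n j = - ff 0 n (j - 1) := by
  have h1 : ((n : ℤ) + 5 - 5 * j) / 2 = ((n : ℤ) + 0 - 5 * (j - 1)) / 2 := by congr 1; ring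
  have h2 : j.negOnePow = -((j - 1).negOnePow : ℤ) := by
    rw [show j = (j - 1) + 1 by ring, Int.negOnePow_succ]; push_cast; ring
  simp only [ff, h1, h2]; ring

lemma ff_neg_one (n : ℕ) (j : ℤ) : ff (-1) n j = - ff 4 n (j + 1) := by
  have h1 : ((n : ℤ) + (-1) - 5 * j) / 2 = ((n : ℤ) + 4 - 5 * (j + 1)) / 2 := by congr 1; ring
  have h2 : ((j + 1).negOnePow : ℤ) = -(j.negOnePow : ℤ) := by
    rw [Int.negOnePow_succ]; push_cast; ring
  simp only [ff, h1, h2]; ring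

lemma sum_shift (a b c : ℤ) (g : ℤ → ℤ) :
    ∑ j ∈ Icc (a + c) (b + c), g j = ∑ j ∈ Icc a b, g (j + c) := by
  rw [← Finset.map_add_right_Icc, Finset.sum_map]
  rfl

lemma AA_succ_aux (t : ℤ) (n : ℕ) :
    AA t (n + 1) = ∑ j ∈ Icc (-(n : ℤ) - 2) ((n : ℤ) + 2), ff (t + 1) n j
      + ∑ j ∈ Icc (-(n : ℤ) - 2) ((n : ℤ) + 2), ff (t - 1) n j := by
  rw [AA, show (-(((n:ℕ)+1 : ℕ) : ℤ) - 1) = -(n : ℤ) - 2 by push_cast; ring,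
    show ((((n:ℕ)+1 : ℕ) : ℤ) + 1) = (n : ℤ) + 2 by push_cast; ring]
  simp only [ff_succ, Finset.sum_add_distrib]

lemma AA1_succ (n : ℕ) : AA 1 (n + 1) = AA 2 n + AA 0 n := by
  rw [AA_succ_aux]
  rw [AA_ext (by norm_num) (by norm_num) (by omega) (by omega),
    show (1 : ℤ) - 1 = 0 by ring,
    AA_ext (by norm_num) (by norm_num) (by omega) (by omega)]
  norm_num

lemma AA2_succ (n : ℕ) : AA 2 (n + 1) = AA 3 n + AA 1 n := by
  rw [AA_succ_aux]
  rw [AA_ext (by norm_num) (by norm_num) (by omega) (by omega),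
    show (2 : ℤ) - 1 = 1 by ring,
    AA_ext (by norm_num) (by norm_num) (by omega) (by omega)]
  norm_num

lemma AA3_succ (n : ℕ) : AA 3 (n + 1) = AA 4 n + AA 2 n := by
  rw [AA_succ_aux]
  rw [AA_ext (by norm_num) (by norm_num) (by omega) (by omega),
    show (3 : ℤ) - 1 = 2 by ring,
    AA_ext (by norm_num) (by norm_num) (by omega) (by omega)]
  norm_num

lemma AA0_succ (n : ℕ) : AA 0 (n + 1) = AA 1 n - AA 4 n := by
  rw [AA_succ_aux]
  rw [AA_ext (by norm_num) (by norm_num) (by omega) (by omega)]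
  have : ∑ j ∈ Icc (-(n : ℤ) - 2) ((n : ℤ) + 2), ff (0 - 1) n j = - AA 4 n := by
    simp only [show (0 : ℤ) - 1 = -1 by ring, ff_neg_one]
    rw [Finset.sum_neg_distrib]
    have := sum_shift (-(n : ℤ) - 2) ((n : ℤ) + 2) 1 (fun j => ff 4 n j)
    rw [← this, show (-(n : ℤ) - 2 + 1) = -(n : ℤ) - 1 by ring,
      AA_ext (by norm_num) (by norm_num) (by omega) (by omega)]
  rw [this]; ring

lemma AA4_succ (n : ℕ) : AA 4 (n + 1) = - AA 0 n + AA 3 n := by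
  rw [AA_succ_aux]
  have h5 : ∑ j ∈ Icc (-(n : ℤ) - 2) ((n : ℤ) + 2), ff (4 + 1) n j = - AA 0 n := by
    simp only [show (4 : ℤ) + 1 = 5 by ring, ff_five]
    rw [Finset.sum_neg_distrib]
    have hs := sum_shift (-(n : ℤ) - 3) ((n : ℤ) + 1) 1 (fun j => ff 0 n (j - 1))
    simp only [show ∀ j : ℤ, j + 1 - 1 = j from fun j => by ring] at hs
    rw [show (-(n : ℤ) - 2) = -(n : ℤ) - 3 + 1 by ring,
      show ((n : ℤ) + 2) = (n : ℤ) + 1 + 1 by ring, hs,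
      AA_ext (by norm_num) (by norm_num) (by omega) (by omega)]
  have h3 : ∑ j ∈ Icc (-(n : ℤ) - 2) ((n : ℤ) + 2), ff (4 - 1) n j = AA 3 n := by
    rw [show (4 : ℤ) - 1 = 3 by ring,
      AA_ext (by norm_num) (by norm_num) (by omega) (by omega)]
  rw [h5, h3]

lemma AA_base :
    AA 0 0 = 1 ∧ AA 1 0 = 1 ∧ AA 2 0 = 0 ∧ AA 3 0 = 0 ∧ AA 4 0 = 0 := by
  refine ⟨?_, ?_, ?_, ?_, ?_⟩ <;> decide

lemma AA_fib (n : ℕ) : AA 0 n = Nat.fib (n + 1) ∧ AA 1 n = Nat.fib (n + 1)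
    ∧ AA 2 n = Nat.fib n ∧ AA 3 n = 0 ∧ AA 4 n = -Nat.fib n := by
  induction n with
  | zero => simpa using AA_base
  | succ n ih =>
      obtain ⟨h0, h1, h2, h3, h4⟩ := ih
      refine ⟨?_, ?_, ?_, ?_, ?_⟩
      · rw [AA0_succ, h1, h4, show n + 1 + 1 = n + 2 from rfl, Nat.fib_add_two]
        push_cast; ring
      · rw [AA1_succ, h2, h0, show n + 1 + 1 = n + 2 from rfl, Nat.fib_add_two]
        push_cast; ring
      · rw [AA2_succ, h3, h1]; ring
      · rw [AA3_succ, h4, h2]; ring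
      · rw [AA4_succ, h0, h3]; ring

lemma sum_symm (m : ℕ) (g : ℤ → ℤ) :
    ∑ j ∈ Icc (-(m : ℤ)) (m : ℤ), g j
      = g 0 + ∑ j ∈ Icc (1 : ℤ) (m : ℤ), (g j + g (-j)) := by
  induction m with
  | zero => simp
  | succ m ih =>
      have e1 : Icc (-((m:ℕ)+1 : ℕ) : ℤ) (((m:ℕ)+1 : ℕ) : ℤ)
          = insert (-(m : ℤ) - 1) (insert ((m : ℤ) + 1) (Icc (-(m : ℤ)) (m : ℤ))) := by
        ext x; simp only [mem_Icc, mem_insert]; push_cast; omega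
      have e2 : Icc (1 : ℤ) (((m:ℕ)+1 : ℕ) : ℤ)
          = insert ((m : ℤ) + 1) (Icc (1 : ℤ) (m : ℤ)) := by
        ext x; simp only [mem_Icc, mem_insert]; push_cast; omega
      rw [e1, e2, Finset.sum_insert (by simp only [mem_insert, mem_Icc]; omega),
        Finset.sum_insert (by simp only [mem_Icc]; omega),
        Finset.sum_insert (by simp only [mem_Icc]; omega), ih,
        show -((m : ℤ) + 1) = -(m : ℤ) - 1 by ring]
      ring

lemma sum_icc_cast (m : ℕ) (g : ℤ → ℤ) :
    ∑ j ∈ Icc (1 : ℤ) (m : ℤ), g j = ∑ q ∈ Icc 1 m, g (q : ℤ) := by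
  refine Finset.sum_nbij' (fun j => j.toNat) (fun q => (q : ℤ)) ?_ ?_ ?_ ?_ ?_
  · intro a ha; simp only [mem_Icc] at *; omega
  · intro a ha; simp only [mem_Icc] at *; omega
  · intro a ha; simp only [mem_Icc] at ha; omega
  · intro a ha; simp only [mem_Icc] at ha; omega
  · intro a ha; simp only [mem_Icc] at ha
    congr 1; omega

lemma ff0_eq (n : ℕ) (j : ℤ) : ff 0 n j = (j.negOnePow : ℤ) * cc n (((n : ℤ) - 5 * j) / 2) := by
  rw [ff, show (n : ℤ) + 0 - 5 * j = (n : ℤ) - 5 * j by ring]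

lemma odd_pair {k q : ℕ} (hk : Odd k) (hq : Odd q) :
    ff 0 k (q : ℤ) + ff 0 k (-(q : ℤ))
      = if 5 * q ≤ k then -2 * (k.choose ((k - 5 * q) / 2) : ℤ) else 0 := by
  have hsgn : (((q : ℤ)).negOnePow : ℤ) = -1 := by
    rw [Int.negOnePow_odd _ ((Int.odd_coe_nat q).mpr hq)]; simp
  have hsgn' : ((-(q : ℤ)).negOnePow : ℤ) = -1 := by rw [Int.negOnePow_neg]; exact hsgn
  obtain ⟨a, ha⟩ := hk; obtain ⟨b, hb⟩ := hq
  rw [ff0_eq, ff0_eq, hsgn, hsgn']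
  by_cases h : 5 * q ≤ k
  · rw [if_pos h]
    have e1 : ((k : ℤ) - 5 * (q : ℤ)) / 2 = (((k - 5 * q) / 2 : ℕ) : ℤ) := by omega
    have e2 : ((k : ℤ) - 5 * (-(q : ℤ))) / 2 = (((k + 5 * q) / 2 : ℕ) : ℤ) := by omega
    rw [e1, e2, cc_coe, cc_coe]
    have e3 : k.choose ((k + 5 * q) / 2) = k.choose ((k - 5 * q) / 2) := by
      rw [← Nat.choose_symm (show (k + 5 * q) / 2 ≤ k by omega)]
      congr 1; omega
    rw [e3]; ring
  · rw [if_neg h]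
    have e1 : ((k : ℤ) - 5 * (q : ℤ)) / 2 < 0 := by omega
    have e2 : (k : ℤ) < ((k : ℤ) - 5 * (-(q : ℤ))) / 2 := by omega
    rw [cc_neg e1, cc_big e2]; ring

lemma even_pair {k r : ℕ} (hk : Odd k) :
    ff 0 k ((2 * r : ℕ) : ℤ) + ff 0 k (-((2 * r : ℕ) : ℤ))
      = if 10 * r ≤ k + 1 then ((k + 1).choose ((k + 1) / 2 - 5 * r) : ℤ) else 0 := by
  have hsgn : ((((2 * r : ℕ) : ℤ)).negOnePow : ℤ) = 1 := by
    rw [Int.negOnePow_even _ ⟨(r : ℤ), by push_cast; ring⟩]; simp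
  have hsgn' : ((-((2 * r : ℕ) : ℤ)).negOnePow : ℤ) = 1 := by
    rw [Int.negOnePow_neg]; exact hsgn
  obtain ⟨a, ha⟩ := hk
  rw [ff0_eq, ff0_eq, hsgn, hsgn', one_mul, one_mul]
  by_cases h : 10 * r ≤ k + 1
  · rw [if_pos h]
    rcases (by omega : 10 * r = k + 1 ∨ 10 * r ≤ k - 1) with h10 | h10
    · have e1 : ((k : ℤ) - 5 * ((2 * r : ℕ) : ℤ)) / 2 < 0 := by omega
      have e2 : ((k : ℤ) - 5 * (-((2 * r : ℕ) : ℤ))) / 2 = ((k : ℕ) : ℤ) := by omega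
      rw [cc_neg e1, e2, cc_coe, Nat.choose_self,
        show (k + 1) / 2 - 5 * r = 0 by omega, Nat.choose_zero_right]
      ring
    · set s := (k - 10 * r) / 2 with hs
      have e1 : ((k : ℤ) - 5 * ((2 * r : ℕ) : ℤ)) / 2 = (s : ℤ) := by omega
      have e2 : ((k : ℤ) - 5 * (-((2 * r : ℕ) : ℤ))) / 2 = (((k + 10 * r) / 2 : ℕ) : ℤ) := by
        omega
      rw [e1, e2, cc_coe, cc_coe]
      have e3 : k.choose ((k + 10 * r) / 2) = k.choose (s + 1) := by
        rw [← Nat.choose_symm (show (k + 10 * r) / 2 ≤ k by omega)]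
        congr 1; omega
      rw [e3, show (k + 1) / 2 - 5 * r = s + 1 by omega, Nat.choose_succ_succ']
      push_cast; ring
  · rw [if_neg h]
    have e1 : ((k : ℤ) - 5 * ((2 * r : ℕ) : ℤ)) / 2 < 0 := by omega
    have e2 : (k : ℤ) < ((k : ℤ) - 5 * (-((2 * r : ℕ) : ℤ))) / 2 := by omega
    rw [cc_neg e1, cc_big e2]; ring

lemma center {k : ℕ} (hk : Odd k) :
    2 * (k.choose (k / 2) : ℤ) = ((k + 1).choose ((k + 1) / 2) : ℤ) := by
  obtain ⟨a, ha⟩ := hk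
  have e1 : (k + 1) / 2 = k / 2 + 1 := by omega
  rw [e1, Nat.choose_succ_succ']
  have e2 : k.choose (k / 2 + 1) = k.choose (k / 2) := by
    rw [← Nat.choose_symm (show k / 2 + 1 ≤ k by omega)]
    congr 1; omega
  rw [e2]; push_cast; ring

theorem fib_odd_identity (k : ℕ) (hk : Odd k) :
    2 * (Nat.fib (k + 1) : ℤ) =
      (Nat.choose (k + 1) ((k + 1) / 2) : ℤ)
        - 4 * ∑ q ∈ (Finset.Icc 1 (k / 5)).filter (fun q => Odd q),
            (Nat.choose k ((k - 5 * q) / 2) : ℤ)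
        + 2 * ∑ q ∈ Finset.Icc 1 ((k + 1) / 10),
            (Nat.choose (k + 1) ((k + 1) / 2 - 5 * q) : ℤ) := by
  have hA : (Nat.fib (k + 1) : ℤ) = AA 0 k := ((AA_fib k).1).symm
  have hrange : AA 0 k = ∑ j ∈ Icc (-((k + 1 : ℕ) : ℤ)) ((k + 1 : ℕ) : ℤ), ff 0 k j := by
    rw [AA]; congr 1 <;> push_cast <;> ring
  rw [hrange, sum_symm (k + 1) (ff 0 k), sum_icc_cast (k + 1)] at hA
  have hc : ff 0 k 0 = (k.choose (k / 2) : ℤ) := by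
    rw [ff0_eq, show ((k : ℤ) - 5 * 0) / 2 = ((k / 2 : ℕ) : ℤ) by omega, cc_coe,
      Int.negOnePow_zero]
    simp
  rw [hc, ← Finset.sum_filter_add_sum_filter_not (Icc 1 (k + 1)) (fun q => Odd q)] at hA
  have hodd : ∑ q ∈ (Icc 1 (k + 1)).filter (fun q => Odd q), (ff 0 k (q : ℤ) + ff 0 k (-(q : ℤ)))
      = -2 * ∑ q ∈ (Icc 1 (k / 5)).filter (fun q => Odd q), (k.choose ((k - 5 * q) / 2) : ℤ) := by
    rw [Finset.mul_sum]
    calc ∑ q ∈ (Icc 1 (k + 1)).filter (fun q => Odd q), (ff 0 k (q : ℤ) + ff 0 k (-(q : ℤ)))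
        = ∑ q ∈ (Icc 1 (k + 1)).filter (fun q => Odd q),
            (if 5 * q ≤ k then -2 * (k.choose ((k - 5 * q) / 2) : ℤ) else 0) := by
          refine Finset.sum_congr rfl fun q hq => ?_
          simp only [mem_filter] at hq
          exact odd_pair hk hq.2
      _ = ∑ q ∈ (Icc 1 (k / 5)).filter (fun q => Odd q),
            (if 5 * q ≤ k then -2 * (k.choose ((k - 5 * q) / 2) : ℤ) else 0) := by
          refine (Finset.sum_subset ?_ ?_).symm
          · intro q hq; simp only [mem_filter, mem_Icc, Nat.odd_iff] at hq ⊢; omega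
          · intro q hq hq'
            simp only [mem_filter, mem_Icc, Nat.odd_iff] at hq hq'
            rw [if_neg (by omega)]
      _ = ∑ q ∈ (Icc 1 (k / 5)).filter (fun q => Odd q),
            (-2 : ℤ) * (k.choose ((k - 5 * q) / 2) : ℤ) := by
          refine Finset.sum_congr rfl fun q hq => ?_
          simp only [mem_filter, mem_Icc] at hq
          rw [if_pos (by omega)]
  have heven : ∑ q ∈ (Icc 1 (k + 1)).filter (fun q => ¬ Odd q),
        (ff 0 k (q : ℤ) + ff 0 k (-(q : ℤ)))
      = ∑ r ∈ Icc 1 ((k + 1) / 10), ((k + 1).choose ((k + 1) / 2 - 5 * r) : ℤ) := by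
    have h1 : ∑ q ∈ (Icc 1 (k + 1)).filter (fun q => ¬ Odd q),
          (ff 0 k (q : ℤ) + ff 0 k (-(q : ℤ)))
        = ∑ r ∈ Icc 1 ((k + 1) / 2),
          (ff 0 k ((2 * r : ℕ) : ℤ) + ff 0 k (-((2 * r : ℕ) : ℤ))) := by
      refine Finset.sum_nbij' (fun q => q / 2) (fun r => 2 * r) ?_ ?_ ?_ ?_ ?_
      · intro q hq; simp only [mem_filter, mem_Icc, Nat.odd_iff] at *; omega
      · intro r hr; simp only [mem_filter, mem_Icc, Nat.odd_iff] at *; omega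
      · intro q hq; simp only [mem_filter, mem_Icc, Nat.odd_iff] at hq; omega
      · intro r hr; simp only [mem_Icc] at hr; omega
      · intro q hq; simp only [mem_filter, mem_Icc, Nat.odd_iff] at hq
        have : 2 * (q / 2) = q := by omega
        rw [this]
    rw [h1]
    calc ∑ r ∈ Icc 1 ((k + 1) / 2),
          (ff 0 k ((2 * r : ℕ) : ℤ) + ff 0 k (-((2 * r : ℕ) : ℤ)))
        = ∑ r ∈ Icc 1 ((k + 1) / 2),
            (if 10 * r ≤ k + 1 then ((k + 1).choose ((k + 1) / 2 - 5 * r) : ℤ) else 0) :=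
          Finset.sum_congr rfl fun r _ => even_pair hk
      _ = ∑ r ∈ Icc 1 ((k + 1) / 10),
            (if 10 * r ≤ k + 1 then ((k + 1).choose ((k + 1) / 2 - 5 * r) : ℤ) else 0) := by
          refine (Finset.sum_subset ?_ ?_).symm
          · intro r hr; simp only [mem_Icc] at *; omega
          · intro r hr hr'
            simp only [mem_Icc] at hr hr'
            rw [if_neg (by omega)]
      _ = ∑ r ∈ Icc 1 ((k + 1) / 10), ((k + 1).choose ((k + 1) / 2 - 5 * r) : ℤ) := by
          refine Finset.sum_congr rfl fun r hr => ?_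
          simp only [mem_Icc] at hr
          rw [if_pos (by omega)]
  rw [hodd, heven] at hA
  have hcen := center hk
  linarith [hA, hcen]
end

section
/- For every natural number k ≥ 0, the (k+1)-st Fibonacci number equals 1ᵀ Qᵏ e₁, i.e. F_{k+1} is the sum of the entries of the first column of the k-th power of the matrix Q. -/
def Q : Matrix (Fin 4) (Fin 4) ℤ :=
  !![0, 1, 0, 0;
     1, 0, 1, 0;
     0, 1, 0, 1;
     0, 0, 1, 0]

lemma Q_col_key (k : ℕ) : ∀ i : Fin 4, (Q ^ k) i 0 =
    if Even k then ![(Nat.fib (k+1) : ℤ) - Nat.fib k, 0, Nat.fib k, 0] i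
    else ![0, (Nat.fib k : ℤ), 0, (Nat.fib (k+1) : ℤ) - Nat.fib k] i := by
  induction k with
  | zero =>
    intro i
    simp only [pow_zero]
    fin_cases i <;> simp [Matrix.one_apply]
  | succ k ih =>
    intro i
    have h : (Q ^ (k+1)) i 0 = ∑ j : Fin 4, Q i j * (Q ^ k) j 0 := by
      rw [pow_succ', Matrix.mul_apply]
    rw [h, Fin.sum_univ_four, ih 0, ih 1, ih 2, ih 3]
    have hfib : (Nat.fib (k+2) : ℤ) = Nat.fib (k+1) + Nat.fib k := by
      rw [Nat.fib_add_two]; push_cast; ring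
    rcases Nat.even_or_odd k with he | ho
    · have h1 : ¬ Even (k+1) := by simp [Nat.even_add_one, he]
      simp only [if_pos he, if_neg h1]
      fin_cases i <;>
        (simp [Q, Matrix.vecHead, Matrix.vecTail]; try linarith [hfib])
    · have h0 : ¬ Even k := by simpa [Nat.not_even_iff_odd] using ho
      have h1 : Even (k+1) := Nat.even_add_one.mpr h0
      simp only [if_neg h0, if_pos h1]
      fin_cases i <;>
        (simp [Q, Matrix.vecHead, Matrix.vecTail]; try linarith [hfib])

theorem fib_eq_ones_pow_Q_e1 (k : ℕ) :
    (Nat.fib (k + 1) : ℤ) = ∑ i : Fin 4, (Q ^ k) i 0 := by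
  rw [Fin.sum_univ_four, Q_col_key k 0, Q_col_key k 1, Q_col_key k 2, Q_col_key k 3]
  rcases Nat.even_or_odd k with he | ho
  · simp only [if_pos he]; simp [Matrix.cons_val_one]; try ring
  · have h0 : ¬ Even k := by simpa [Nat.not_even_iff_odd] using ho
    simp only [if_neg h0]; simp [Matrix.cons_val_one]; try ring
end
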